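/- Define words w_j over the alphabet {1, …, n} inductively by w_1 = 1 and w_j = w_{j−1} · j · w_{j−1} for 1 < j ≤ n. Then for every j with 1 ≤ j ≤ n, the word w_j has length 2^j − 1 and contains no bad j'-pair for any j' ∈ {1, …, n}. -/

import Mathlib

/-!
Every letter of `w_j` is at most `j`, and `w_{j+1} = w_j (j+1) w_j`. Two occurrences of a letter
`j' ≤ j` on opposite sides of the middle letter are separated by the larger letter `j + 1`, two on
the same side form a bad pair of `w_j`, and `j + 1` occurs only once.
-/

attribute [local instance] Classical.propDecidable

noncomputable section

/-- The word `w` (over the alphabet `{1, …, n} ⊆ ℕ`) contains a bad `j`-pair: two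
occurrences of `j` with no larger letter in between. -/
def HasBadPair (w : List ℕ) (j : ℕ) : Prop :=
  ∃ i i' : Fin w.length, (i : ℕ) < (i' : ℕ) ∧ w.get i = j ∧ w.get i' = j ∧
    ∀ i'' : Fin w.length, (i : ℕ) < (i'' : ℕ) → (i'' : ℕ) < (i' : ℕ) → w.get i'' ≤ j

/-- The words `w_j` with `w_1 = 1` and `w_j = w_{j-1} · j · w_{j-1}`. -/
def wWord : ℕ → List ℕ
  | 0 => []
  | j + 1 => wWord j ++ [j + 1] ++ wWord j

/-- Positions are plain naturals, so that bad pairs transport along `List.take` and `List.drop`. -/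
def IsBadPairAt (w : List ℕ) (j i i' : ℕ) : Prop :=
  i < i' ∧ w[i]? = some j ∧ w[i']? = some j ∧
    ∀ k x, i < k → k < i' → w[k]? = some x → x ≤ j

theorem hasBadPair_iff_exists_isBadPairAt {w : List ℕ} {j : ℕ} :
    HasBadPair w j ↔ ∃ i i', IsBadPairAt w j i i' := by
  constructor
  · rintro ⟨i, i', hii', hi, hi', hbetween⟩
    refine ⟨i, i', hii', by simp [← hi], by simp [← hi'], fun k x hik hki' hk => ?_⟩
    obtain ⟨hklt, rfl⟩ := List.getElem?_eq_some_iff.mp hk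
    exact hbetween ⟨k, hklt⟩ hik hki'
  · rintro ⟨i, i', hii', hi, hi', hbetween⟩
    obtain ⟨hilt, hi⟩ := List.getElem?_eq_some_iff.mp hi
    obtain ⟨hi'lt, hi'⟩ := List.getElem?_eq_some_iff.mp hi'
    exact ⟨⟨i, hilt⟩, ⟨i', hi'lt⟩, hii', hi, hi', fun k hik hki' =>
      hbetween k _ hik hki' (List.getElem?_eq_getElem k.isLt)⟩

namespace IsBadPairAt

variable {w : List ℕ} {j i i' : ℕ}

theorem take {n : ℕ} (h : IsBadPairAt w j i i') (hn : i' < n) :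
    IsBadPairAt (w.take n) j i i' := by
  obtain ⟨hii', hi, hi', hbetween⟩ := h
  refine ⟨hii', ?_, ?_, fun k x hik hki' hk => hbetween k x hik hki' ?_⟩
  · rwa [List.getElem?_take_of_lt (by omega)]
  · rwa [List.getElem?_take_of_lt hn]
  · rwa [List.getElem?_take_of_lt (by omega)] at hk

theorem drop {n : ℕ} (h : IsBadPairAt w j i i') (hn : n ≤ i) :
    IsBadPairAt (w.drop n) j (i - n) (i' - n) := by
  obtain ⟨hii', hi, hi', hbetween⟩ := h
  refine ⟨by omega, ?_, ?_, fun k x hik hki' hk => hbetween (n + k) x (by omega) (by omega) ?_⟩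
  · rwa [List.getElem?_drop, Nat.add_sub_cancel' hn]
  · rwa [List.getElem?_drop, Nat.add_sub_cancel' (by omega)]
  · rwa [List.getElem?_drop] at hk

variable {u v : List ℕ} {a : ℕ}

theorem mem_or_mem_of_append_cons (h : IsBadPairAt (u ++ a :: v) j i i') : j ∈ u ∨ j ∈ v := by
  obtain ⟨hii', hi, hi', -⟩ := h
  rcases lt_or_ge i u.length with hleft | hright
  · rw [List.getElem?_append_left hleft] at hi
    exact .inl (List.mem_of_getElem? hi)
  · rw [List.getElem?_append_right (by omega), List.getElem?_cons,
      if_neg (by omega)] at hi'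
    exact .inr (List.mem_of_getElem? hi')

theorem of_append_cons_of_lt (h : IsBadPairAt (u ++ a :: v) j i i') (hja : j < a) :
    IsBadPairAt u j i i' ∨ IsBadPairAt v j (i - (u.length + 1)) (i' - (u.length + 1)) := by
  have hmid : (u ++ a :: v)[u.length]? = some a := by simp
  have hi_ne : i ≠ u.length := by rintro rfl; have := h.2.1; simp at this; omega
  have hi'_ne : i' ≠ u.length := by rintro rfl; have := h.2.2.1; simp at this; omega
  have hnot_across : ¬ (i < u.length ∧ u.length < i') := fun ⟨h₁, h₂⟩ =>
    absurd (h.2.2.2 _ _ h₁ h₂ hmid) (by omega)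
  rcases Nat.lt_or_gt_of_ne hi'_ne with hleft | hright
  · left
    simpa using h.take hleft
  · right
    simpa using h.drop (n := u.length + 1) (by omega)

end IsBadPairAt

theorem not_hasBadPair_append_cons {u v : List ℕ} {a j : ℕ} (hu : ∀ x ∈ u, x < a)
    (hv : ∀ x ∈ v, x < a) (hu' : ¬ HasBadPair u j) (hv' : ¬ HasBadPair v j) :
    ¬ HasBadPair (u ++ a :: v) j := by
  simp only [hasBadPair_iff_exists_isBadPairAt, not_exists] at hu' hv' ⊢
  intro i i' h
  rcases lt_or_ge j a with hja | haj
  · rcases h.of_append_cons_of_lt hja with hleft | hright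
    · exact hu' _ _ hleft
    · exact hv' _ _ hright
  · rcases h.mem_or_mem_of_append_cons with hj | hj
    · exact absurd (hu j hj) (by omega)
    · exact absurd (hv j hj) (by omega)

theorem wWord_succ (j : ℕ) : wWord (j + 1) = wWord j ++ (j + 1) :: wWord j := by
  simp [wWord]

theorem wWord_length (j : ℕ) : (wWord j).length = 2 ^ j - 1 := by
  induction j with
  | zero => rfl
  | succ k ih =>
    rw [wWord_succ, List.length_append, List.length_cons, ih, pow_succ]
    have := k.one_le_two_pow
    omega

theorem le_of_mem_wWord {j x : ℕ} (hx : x ∈ wWord j) : x ≤ j := by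
  induction j with
  | zero => simp [wWord] at hx
  | succ k ih =>
    rw [wWord_succ, List.mem_append, List.mem_cons] at hx
    rcases hx with hx | rfl | hx
    · exact (ih hx).trans k.le_succ
    · rfl
    · exact (ih hx).trans k.le_succ

theorem not_hasBadPair_wWord (j j' : ℕ) : ¬ HasBadPair (wWord j) j' := by
  induction j with
  | zero => rintro ⟨⟨_, h⟩, -⟩; simp [wWord] at h
  | succ k ih =>
    have hlt : ∀ x ∈ wWord k, x < k + 1 := fun x hx => Nat.lt_succ_of_le (le_of_mem_wWord hx)
    rw [wWord_succ]
    exact not_hasBadPair_append_cons hlt hlt ih ih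

theorem statement17_general (n j : ℕ) :
    (wWord j).length = 2 ^ j - 1 ∧
    ∀ j' : ℕ, 1 ≤ j' → j' ≤ n → ¬ HasBadPair (wWord j) j' :=
  ⟨wWord_length j, fun j' _ _ => not_hasBadPair_wWord j j'⟩

/-- For `1 ≤ j ≤ n`, the word `w_j` has length `2^j - 1` and contains no
bad `j'`-pair for any `j' ∈ {1, …, n}`. -/
theorem statement17 (n j : ℕ) (hj1 : 1 ≤ j) (hjn : j ≤ n) :
    (wWord j).length = 2 ^ j - 1 ∧
    ∀ j' : ℕ, 1 ≤ j' → j' ≤ n → ¬ HasBadPair (wWord j) j' :=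
  statement17_general n j
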